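/- arXiv:2112.13998 — 2 statements merged into one kernel-verified Lean document; each statement's English description precedes it below -/
import Mathlib

section
/- Let K ≥ 1 and p ≥ 1 be integers and let c_{jk} ≥ 0 be real numbers for j = 1,…,p and k = 1,…,K. For each k set c_{·k} = Σ_{j=1}^p c_{jk} and assume c_{·k} > 0, and set c̄_{·K} = (Σ_{k=1}^K c_{·k})/K. Fix j and define v_j = (1/K) Σ_{k=1}^K c_{jk}/c_{·k} and ṽ_j = (Σ_{k=1}^K c_{jk}) / (Σ_{k=1}^K c_{·k}). If (1/K) Σ_{k=1}^K (c_{jk}/c_{·k})² ≤ δ₁ and [ (1/K) Σ_{k=1}^K (c_{·k} − c̄_{·K})² ]^{1/2} / c̄_{·K} ≤ δ₂ for some positive real numbers δ₁, δ₂ > 0, then |ṽ_j − v_j| ≤ δ₁^{1/2} · δ₂. -/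
/-- Lemma 3.1: if the second moment of the per-sample usage proportions is bounded by `δ₁`
and the coefficient of variation of the column sums is bounded by `δ₂`, then the
approximation `ṽ_j` of the BART VIP `v_j` satisfies `|ṽ_j - v_j| ≤ √δ₁ · δ₂`. -/
theorem stmt_0 (K p : ℕ) (hK : 1 ≤ K) (hp : 1 ≤ p)
    (c : Fin p → Fin K → ℝ) (hc : ∀ j k, 0 ≤ c j k)
    (csum : Fin K → ℝ) (hcsum : ∀ k, csum k = ∑ j, c j k)
    (hpos : ∀ k, 0 < csum k)
    (cbar : ℝ) (hcbar : cbar = (∑ k, csum k) / K)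
    (j : Fin p)
    (v : ℝ) (hv : v = (1 / K) * ∑ k, c j k / csum k)
    (vtil : ℝ) (hvtil : vtil = (∑ k, c j k) / (∑ k, csum k))
    (δ₁ δ₂ : ℝ) (hδ₁ : 0 < δ₁) (hδ₂ : 0 < δ₂)
    (h1 : (1 / K) * ∑ k, (c j k / csum k) ^ 2 ≤ δ₁)
    (h2 : Real.sqrt ((1 / K) * ∑ k, (csum k - cbar) ^ 2) / cbar ≤ δ₂) :
    |vtil - v| ≤ Real.sqrt δ₁ * δ₂ := by
  have hKpos : (0:ℝ) < K := by exact_mod_cast hK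
  have hne : (Finset.univ : Finset (Fin K)).Nonempty := ⟨⟨0, hK⟩, Finset.mem_univ _⟩
  have hsum : 0 < ∑ k, csum k := Finset.sum_pos (fun k _ => hpos k) hne
  have hcbarpos : 0 < cbar := hcbar ▸ div_pos hsum hKpos
  have hKC : (K:ℝ) * cbar = ∑ k, csum k := by
    rw [hcbar]; field_simp
  set r : Fin K → ℝ := fun k => c j k / csum k with hr
  set d : Fin K → ℝ := fun k => csum k - cbar with hd
  -- key identity
  have hexp : ∑ k, r k * d k = (∑ k, c j k) - cbar * ∑ k, r k := by
    have : ∀ k, r k * d k = c j k - cbar * r k := by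
      intro k
      have h := (hpos k).ne'
      simp only [hr, hd]
      field_simp
    rw [Finset.sum_congr rfl (fun k _ => this k), Finset.sum_sub_distrib,
      ← Finset.mul_sum]
  have hkey : vtil - v = (∑ k, r k * d k) / ((K:ℝ) * cbar) := by
    rw [hexp, hvtil, hv, ← hKC]
    have h1' : (K:ℝ) ≠ 0 := hKpos.ne'
    have h2' : cbar ≠ 0 := hcbarpos.ne'
    field_simp
  -- Cauchy–Schwarz
  have hcs : |∑ k, r k * d k| ≤ Real.sqrt (∑ k, r k ^ 2) * Real.sqrt (∑ k, d k ^ 2) := by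
    have habs : |∑ k, r k * d k| = Real.sqrt ((∑ k, r k * d k) ^ 2) := by
      rw [Real.sqrt_sq_eq_abs]
    rw [habs, ← Real.sqrt_mul (Finset.sum_nonneg fun k _ => sq_nonneg _)]
    apply Real.sqrt_le_sqrt
    exact Finset.sum_mul_sq_le_sq_mul_sq _ _ _
  have hfact : Real.sqrt (∑ k, r k ^ 2) * Real.sqrt (∑ k, d k ^ 2) / ((K:ℝ) * cbar)
      = Real.sqrt ((1 / K) * ∑ k, r k ^ 2) *
        (Real.sqrt ((1 / K) * ∑ k, d k ^ 2) / cbar) := by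
    rw [Real.sqrt_mul (by positivity), Real.sqrt_mul (by positivity)]
    have hss : Real.sqrt (1/K) * Real.sqrt (1/K) = 1/(K:ℝ) :=
      Real.mul_self_sqrt (by positivity)
    have hre : Real.sqrt (1/K) * Real.sqrt (∑ k, r k ^ 2) *
        (Real.sqrt (1/K) * Real.sqrt (∑ k, d k ^ 2) / cbar)
        = (Real.sqrt (1/K) * Real.sqrt (1/K)) *
          (Real.sqrt (∑ k, r k ^ 2) * Real.sqrt (∑ k, d k ^ 2)) / cbar := by ring
    rw [hre, hss]
    field_simp
  have hbound : |vtil - v| ≤ Real.sqrt ((1 / K) * ∑ k, r k ^ 2) *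
      (Real.sqrt ((1 / K) * ∑ k, d k ^ 2) / cbar) := by
    rw [hkey, abs_div, abs_of_pos (by positivity : (0:ℝ) < (K:ℝ) * cbar), ← hfact]
    exact div_le_div_of_nonneg_right hcs (by positivity) |>.trans_eq rfl
  refine hbound.trans ?_
  apply mul_le_mul
  · exact Real.sqrt_le_sqrt h1
  · exact h2
  · positivity
  · positivity
end

section
/- Let K ≥ 1 and p ≥ 1 be integers and let c_{jk} ≥ 0 be real numbers for j = 1,…,p and k = 1,…,K. For each k set c_{·k} = Σ_{j=1}^p c_{jk} and assume c_{·k} > 0, and set c̄_{·K} = (Σ_{k=1}^K c_{·k})/K. Fix j and define v_j = (1/K) Σ_{k=1}^K c_{jk}/c_{·k} and ṽ_j = (Σ_{k=1}^K c_{jk}) / (Σ_{k=1}^K c_{·k}). Then |ṽ_j − v_j| ≤ [ (1/K) Σ_{k=1}^K (c_{jk}/c_{·k})² ]^{1/2} · [ (1/K) Σ_{k=1}^K (c_{·k} − c̄_{·K})² ]^{1/2} / c̄_{·K}. -/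
/-- The sharp Cauchy–Schwarz bound from the proof of Lemma 3.1:
`|ṽ_j − v_j| ≤ [(1/K) Σ_k (c_{jk}/c_{·k})²]^{1/2} · [(1/K) Σ_k (c_{·k} − c̄_{·K})²]^{1/2} / c̄_{·K}`. -/
theorem stmt_2 (K p : ℕ) (hK : 1 ≤ K) (hp : 1 ≤ p)
    (c : Fin p → Fin K → ℝ) (hc : ∀ j k, 0 ≤ c j k)
    (csum : Fin K → ℝ) (hcsum : ∀ k, csum k = ∑ j, c j k)
    (hpos : ∀ k, 0 < csum k)
    (cbar : ℝ) (hcbar : cbar = (∑ k, csum k) / K)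
    (j : Fin p)
    (v : ℝ) (hv : v = (1 / K) * ∑ k, c j k / csum k)
    (vtil : ℝ) (hvtil : vtil = (∑ k, c j k) / (∑ k, csum k)) :
    |vtil - v| ≤ Real.sqrt ((1 / K) * ∑ k, (c j k / csum k) ^ 2) *
      Real.sqrt ((1 / K) * ∑ k, (csum k - cbar) ^ 2) / cbar := by
  haveI : Nonempty (Fin K) := Fin.pos_iff_nonempty.mp hK
  have hKpos : (0:ℝ) < K := by exact_mod_cast hK
  have hS : 0 < ∑ k, csum k := Finset.sum_pos (fun k _ => hpos k) Finset.univ_nonempty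
  have hcb : 0 < cbar := by rw [hcbar]; positivity
  set r : Fin K → ℝ := fun k => c j k / csum k with hr
  set d : Fin K → ℝ := fun k => csum k - cbar with hd
  have hSK : ∑ k, csum k = K * cbar := by rw [hcbar]; field_simp
  have hkey : vtil - v = (∑ k, r k * d k) / (K * cbar) := by
    have h1 : vtil = (∑ k, r k * csum k) / (K * cbar) := by
      rw [hvtil, hSK]
      congr 1
      refine Finset.sum_congr rfl fun k _ => ?_
      field_simp [hr, (hpos k).ne']
      exact (div_mul_cancel₀ (c j k) (hpos k).ne').symm
    have h2 : v = (∑ k, r k * cbar) / (K * cbar) := by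
      rw [hv, ← Finset.sum_mul]
      field_simp
    rw [h1, h2, div_sub_div_same, ← Finset.sum_sub_distrib]
    congr 1
    refine Finset.sum_congr rfl fun k _ => ?_
    simp [hd]; ring
  have hra : 0 ≤ ∑ k, r k ^ 2 := Finset.sum_nonneg fun k _ => sq_nonneg _
  have hda : 0 ≤ ∑ k, d k ^ 2 := Finset.sum_nonneg fun k _ => sq_nonneg _
  have hcs : |∑ k, r k * d k| ≤ Real.sqrt (∑ k, r k ^ 2) * Real.sqrt (∑ k, d k ^ 2) := by
    have h := Finset.sum_mul_sq_le_sq_mul_sq Finset.univ r d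
    have h2 : (∑ k, r k * d k) ^ 2 ≤ (∑ k, r k ^ 2) * (∑ k, d k ^ 2) := by
      simpa [pow_two] using h
    have := Real.sqrt_le_sqrt h2
    rwa [Real.sqrt_sq_eq_abs, Real.sqrt_mul hra] at this
  have hKK : Real.sqrt K * Real.sqrt K = K := Real.mul_self_sqrt hKpos.le
  have h1 : ∀ a : ℝ, Real.sqrt ((1 / K) * a) = Real.sqrt a / Real.sqrt K := by
    intro a
    rw [Real.sqrt_mul (by positivity), one_div, Real.sqrt_inv]
    ring
  have hrhs : Real.sqrt ((1 / K) * ∑ k, (c j k / csum k) ^ 2) *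
      Real.sqrt ((1 / K) * ∑ k, (csum k - cbar) ^ 2) / cbar
      = Real.sqrt (∑ k, r k ^ 2) * Real.sqrt (∑ k, d k ^ 2) / (K * cbar) := by
    rw [h1, h1, div_mul_div_comm, hKK, div_div]
  rw [hkey, hrhs, abs_div, abs_of_pos (mul_pos hKpos hcb)]
  exact div_le_div_of_nonneg_right hcs (mul_pos hKpos hcb).le
end
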